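/- Canonical moments of matrix measures are invariant under affine transformations: if ν is the pushforward of the matrix measure μ on [0,1] under γ(x) = (b-a)x + a with a < b, then the canonical moments of ν (computed relative to the moment space of matrix measures on [a,b]) coincide with those of μ, whenever defined. In particular, the moments satisfy T_n = Σ_{i=0}^{n} C(n,i) a^{n-i}(b-a)^i S_i, and T_n - T_n^± = (b-a)^n (S_n - S_n^±). -/

import Mathlib

open MeasureTheory Matrix

/-- A (normalized, nonnegative definite, symmetric) `p×p` matrix measure
supported on the interval `[c,d]`, represented by a finite nonnegative base
measure together with a symmetric positive semidefinite matrix density. -/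
structure MatMeas (p : ℕ) (c d : ℝ) where
  base : Measure ℝ
  dens : ℝ → Matrix (Fin p) (Fin p) ℝ
  finite : IsFiniteMeasure base
  supp : base (Set.Icc c d)ᶜ = 0
  symm : ∀ x, (dens x).IsSymm
  psd : ∀ x, (dens x).PosSemidef
  integrable : ∀ i j, Integrable (fun x => dens x i j) base
  normalized : ∀ i j, (∫ x, dens x i j ∂base) = (1 : Matrix (Fin p) (Fin p) ℝ) i j

/-- The `k`-th (matrix) moment `S_k = ∫ x^k dμ(x)` of a matrix measure. -/
noncomputable def mmoment {p : ℕ} {c d : ℝ} (μ : MatMeas p c d) (k : ℕ) :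
    Matrix (Fin p) (Fin p) ℝ :=
  Matrix.of fun i j => ∫ x, x ^ k * μ.dens x i j ∂μ.base

/-- The matrix `μ(A)` assigned to a Borel set by a matrix measure. -/
noncomputable def mmOf {p : ℕ} {c d : ℝ} (μ : MatMeas p c d) (A : Set ℝ) :
    Matrix (Fin p) (Fin p) ℝ :=
  Matrix.of fun i j => ∫ x in A, μ.dens x i j ∂μ.base

/-- The set of possible `k`-th moments of matrix measures on `[c,d]` whose
moments of order `1,…,k-1` are prescribed by `S`. -/
def kthMomentSet (p : ℕ) (c d : ℝ) (k : ℕ) (S : ℕ → Matrix (Fin p) (Fin p) ℝ) :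
    Set (Matrix (Fin p) (Fin p) ℝ) :=
  { T | ∃ ν : MatMeas p c d, (∀ j, 1 ≤ j → j < k → mmoment ν j = S j) ∧ mmoment ν k = T }


/-! The affine map `γ x = (b - a) x + a` and its inverse transport matrix measures between
`[0,1]` and `[a,b]`, and `γ` turns the `n`-th moment into
`∑_{i<n} C(n,i) aⁿ⁻ⁱ (b-a)ⁱ Sᵢ + (b-a)ⁿ Sₙ`. For prescribed lower moments, the set of possible
`n`-th moments on `[a,b]` is therefore the image of the one on `[0,1]` under
`X ↦ L + (b-a)ⁿ X`, an isomorphism for the Loewner order. So the extremal moments correspond,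
all differences scale by `(b-a)ⁿ`, the square roots of `Smax - Smin` by `(b-a)^(n/2)`, and the
canonical moments agree.

That `ν` has the moments of the pushforward of `μ` is checked on the scalar measures
`A ↦ vᵀ ν(A) v`, which are nonnegative because the density is positive semidefinite;
polarization recovers the matrices. -/

open Set Finset

namespace Matrix

variable {n : Type*} [Fintype n]

open scoped MatrixOrder in
theorem eq_of_forall_dotProduct_mulVec_eq {A B : Matrix n n ℝ} (hA : A.IsHermitian)
    (hB : B.IsHermitian) (h : ∀ v : n → ℝ, v ⬝ᵥ A *ᵥ v = v ⬝ᵥ B *ᵥ v) : A = B :=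
  le_antisymm
    (PosSemidef.of_dotProduct_mulVec_nonneg (hB.sub hA) fun v => by simp [sub_mulVec, h])
    (PosSemidef.of_dotProduct_mulVec_nonneg (hA.sub hB) fun v => by simp [sub_mulVec, h])

theorem integrable_dotProduct_mulVec {α : Type*} [MeasurableSpace α] {m : Measure α}
    {F : α → Matrix n n ℝ} (hF : ∀ i j, Integrable (fun x => F x i j) m) (v : n → ℝ) :
    Integrable (fun x => v ⬝ᵥ F x *ᵥ v) m := by
  simp only [dotProduct, mulVec]
  exact integrable_finsetSum _ fun i _ =>
    (integrable_finsetSum _ fun j _ => (hF i j).mul_const _).const_mul _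

theorem integral_dotProduct_mulVec {α : Type*} [MeasurableSpace α] {m : Measure α}
    {F : α → Matrix n n ℝ} (hF : ∀ i j, Integrable (fun x => F x i j) m) (v : n → ℝ) :
    ∫ x, v ⬝ᵥ F x *ᵥ v ∂m = v ⬝ᵥ (of fun i j => ∫ x, F x i j ∂m) *ᵥ v := by
  simp only [dotProduct, mulVec, of_apply, Finset.mul_sum]
  rw [integral_finsetSum _ fun i _ => integrable_finsetSum _ fun j _ =>
    ((hF i j).mul_const _).const_mul _]
  refine Finset.sum_congr rfl fun i _ => ?_
  rw [integral_finsetSum _ fun j _ => ((hF i j).mul_const _).const_mul _]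
  refine Finset.sum_congr rfl fun j _ => ?_
  rw [integral_const_mul, integral_mul_const]

variable [DecidableEq n]

open scoped MatrixOrder in
theorem PosSemidef.eq_smul_of_mul_self_eq {R R' : Matrix n n ℝ} (hR : R.PosSemidef)
    (hR' : R'.PosSemidef) {r : ℝ} (hr : 0 ≤ r) (h : R' * R' = (r * r) • (R * R)) :
    R' = r • R :=
  (CFC.sq_eq_sq_iff R' (r • R) hR'.nonneg (hR.smul hr).nonneg).mp
    (by rw [sq, sq, h, smul_mul_smul_comm])

theorem PosDef.inv_mul_smul_mul_inv_of_mul_self_eq_smul {R R' : Matrix n n ℝ}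
    (hR : R.PosDef) (hR' : R'.PosSemidef) {c : ℝ} (hc : 0 < c)
    (h : R' * R' = c • (R * R)) (X : Matrix n n ℝ) :
    R'⁻¹ * (c • X) * R'⁻¹ = R⁻¹ * X * R⁻¹ := by
  set r := √c
  have hrr : r * r = c := Real.mul_self_sqrt hc.le
  have hr : r ≠ 0 := (Real.sqrt_pos.2 hc).ne'
  have hR'r : R' = r • R :=
    hR.posSemidef.eq_smul_of_mul_self_eq hR' (Real.sqrt_nonneg c) (by rw [h, hrr])
  have hinv : R'⁻¹ = r⁻¹ • R⁻¹ := inv_eq_right_inv <| by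
    rw [hR'r, smul_mul_smul_comm, mul_inv_cancel₀ hr,
      mul_nonsing_inv R ((isUnit_iff_isUnit_det R).mp hR.isUnit), one_smul]
  rw [hinv, ← hrr, smul_mul_smul_comm, smul_mul_smul_comm, ← mul_assoc, inv_mul_cancel₀ hr,
    one_mul, mul_inv_cancel₀ hr, one_smul]

end Matrix

noncomputable def affineMeasurableEquiv (s t : ℝ) (hs : s ≠ 0) : ℝ ≃ᵐ ℝ :=
  (affineHomeomorph s t hs).toMeasurableEquiv

theorem coe_affineMeasurableEquiv {s : ℝ} (t : ℝ) (hs : s ≠ 0) :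
    ⇑(affineMeasurableEquiv s t hs) = fun x => s * x + t :=
  rfl

theorem coe_affineMeasurableEquiv_symm {s : ℝ} (t : ℝ) (hs : s ≠ 0) :
    ⇑(affineMeasurableEquiv s t hs).symm = fun y => s⁻¹ * y + -(s⁻¹ * t) := by
  funext y
  change (y - t) / s = _
  ring

theorem mapsTo_affineMeasurableEquiv_unitInterval {a b : ℝ} (hab : a < b) :
    MapsTo (affineMeasurableEquiv (b - a) a (sub_pos.2 hab).ne') (Icc 0 1) (Icc a b) ∧
      MapsTo (affineMeasurableEquiv (b - a) a (sub_pos.2 hab).ne').symm (Icc a b) (Icc 0 1) := by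
  have hImage : affineMeasurableEquiv (b - a) a (sub_pos.2 hab).ne' '' Icc 0 1 = Icc a b := by
    simpa [coe_affineMeasurableEquiv] using affineHomeomorph_image_I (b - a) a (sub_pos.2 hab)
  refine ⟨hImage ▸ mapsTo_image _ _, ?_⟩
  rw [← hImage, MeasurableEquiv.image_eq_preimage_symm]
  exact mapsTo_preimage _ _

namespace MatMeas

variable {p n : ℕ} {c d c' d' c'' d'' : ℝ}

theorem ae_mem_Icc (ρ : MatMeas p c d) : ∀ᵐ x ∂ρ.base, x ∈ Icc c d :=
  measure_eq_zero_iff_ae_notMem.mp ρ.supp |>.mono fun _ hx => not_not.mp hx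

theorem integrable_pow_mul_dens (ρ : MatMeas p c d) (k : ℕ) (i j : Fin p) :
    Integrable (fun x => x ^ k * ρ.dens x i j) ρ.base := by
  refine (ρ.integrable i j).bdd_mul (c := max |c| |d| ^ k)
    (continuous_pow k).aestronglyMeasurable ?_
  filter_upwards [ρ.ae_mem_Icc] with x hx
  rw [norm_pow, Real.norm_eq_abs]
  exact pow_le_pow_left₀ (abs_nonneg x) (abs_le_max_abs_abs hx.1 hx.2) k

theorem mmoment_zero (ρ : MatMeas p c d) : mmoment ρ 0 = 1 := by
  ext i j
  simpa [mmoment] using ρ.normalized i j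

theorem isHermitian_mmoment (ρ : MatMeas p c d) (k : ℕ) : (mmoment ρ k).IsHermitian := by
  ext i j
  simp only [mmoment, conjTranspose_apply, of_apply, star_trivial]
  congr 1 with x
  simpa using congr_arg (x ^ k * ·) ((ρ.psd x).isHermitian.apply i j)

theorem dotProduct_dens_mulVec_nonneg (ρ : MatMeas p c d) (v : Fin p → ℝ) (x : ℝ) :
    0 ≤ v ⬝ᵥ ρ.dens x *ᵥ v := by
  simpa using (ρ.psd x).dotProduct_mulVec_nonneg v

noncomputable def quadMeasure (ρ : MatMeas p c d) (v : Fin p → ℝ) : Measure ℝ :=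
  ρ.base.withDensity fun x => ENNReal.ofReal (v ⬝ᵥ ρ.dens x *ᵥ v)

theorem quadMeasure_apply (ρ : MatMeas p c d) (v : Fin p → ℝ) {A : Set ℝ}
    (hA : MeasurableSet A) : ρ.quadMeasure v A = ENNReal.ofReal (v ⬝ᵥ mmOf ρ A *ᵥ v) := by
  rw [quadMeasure, withDensity_apply _ hA, ← ofReal_integral_eq_lintegral_ofReal
    (integrable_dotProduct_mulVec ρ.integrable v).restrict
    (ae_of_all _ (ρ.dotProduct_dens_mulVec_nonneg v)), mmOf,
    integral_dotProduct_mulVec fun i j => (ρ.integrable i j).restrict]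

theorem integral_pow_quadMeasure (ρ : MatMeas p c d) (v : Fin p → ℝ) (k : ℕ) :
    ∫ x, x ^ k ∂ρ.quadMeasure v = v ⬝ᵥ mmoment ρ k *ᵥ v := by
  have hmeas : AEMeasurable (fun x => ENNReal.ofReal (v ⬝ᵥ ρ.dens x *ᵥ v)) ρ.base :=
    (integrable_dotProduct_mulVec ρ.integrable v).aemeasurable.ennreal_ofReal
  have hmoment := integral_dotProduct_mulVec (F := fun x => x ^ k • ρ.dens x)
    (ρ.integrable_pow_mul_dens k) v
  simp only [Matrix.smul_apply, smul_eq_mul] at hmoment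
  rw [quadMeasure, integral_withDensity_eq_integral_toReal_smul₀ hmeas
    (ae_of_all _ fun _ => ENNReal.ofReal_lt_top), mmoment, ← hmoment]
  congr 1 with x
  rw [ENNReal.toReal_ofReal (ρ.dotProduct_dens_mulVec_nonneg v x), smul_mulVec,
    dotProduct_smul, smul_eq_mul, smul_eq_mul, mul_comm]

theorem mmoment_eq_of_mmOf_eq (ρ : MatMeas p c d) (ρ' : MatMeas p c' d')
    (h : ∀ A, MeasurableSet A → mmOf ρ A = mmOf ρ' A) (k : ℕ) :
    mmoment ρ k = mmoment ρ' k := by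
  refine eq_of_forall_dotProduct_mulVec_eq (ρ.isHermitian_mmoment k)
    (ρ'.isHermitian_mmoment k) fun v => ?_
  have hquad : ρ.quadMeasure v = ρ'.quadMeasure v :=
    Measure.ext fun A hA => by rw [quadMeasure_apply _ _ hA, quadMeasure_apply _ _ hA, h A hA]
  rw [← integral_pow_quadMeasure, hquad, integral_pow_quadMeasure]

noncomputable def push (ρ : MatMeas p c d) (e : ℝ ≃ᵐ ℝ)
    (he : MapsTo e (Icc c d) (Icc c' d')) : MatMeas p c' d' where
  base := ρ.base.map e
  dens := ρ.dens ∘ e.symm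
  finite := by
    have := ρ.finite
    infer_instance
  supp := by
    rw [Measure.map_apply e.measurable measurableSet_Icc.compl]
    exact measure_mono_null (fun _ hx hxI => hx (he hxI)) ρ.supp
  symm _ := ρ.symm _
  psd _ := ρ.psd _
  integrable i j := by
    rw [integrable_map_equiv]
    simpa [Function.comp_def] using ρ.integrable i j
  normalized i j := by
    rw [integral_map_equiv]
    simpa using ρ.normalized i j

section Push

variable {e e' : ℝ ≃ᵐ ℝ} {s t : ℝ}

theorem integral_mul_push_dens (ρ : MatMeas p c d) (he : MapsTo e (Icc c d) (Icc c' d'))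
    (g : ℝ → ℝ) (i j : Fin p) :
    ∫ y, g y * (ρ.push e he).dens y i j ∂(ρ.push e he).base =
      ∫ x, g (e x) * ρ.dens x i j ∂ρ.base := by
  simp [push, integral_map_equiv]

theorem mmOf_push (ρ : MatMeas p c d) (he : MapsTo e (Icc c d) (Icc c' d')) (A : Set ℝ) :
    mmOf (ρ.push e he) A = mmOf ρ (e ⁻¹' A) := by
  ext i j
  simp [mmOf, push, setIntegral_map_equiv]

theorem mmoment_push (ρ : MatMeas p c d) (he : MapsTo e (Icc c d) (Icc c' d')) (k : ℕ) :
    mmoment (ρ.push e he) k = of fun i j => ∫ x, e x ^ k * ρ.dens x i j ∂ρ.base := by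
  ext i j
  exact ρ.integral_mul_push_dens he (· ^ k) i j

theorem mmoment_push_push_of_leftInverse (ρ : MatMeas p c d)
    (he : MapsTo e (Icc c d) (Icc c' d')) (he' : MapsTo e' (Icc c' d') (Icc c'' d''))
    (h : Function.LeftInverse e' e) (k : ℕ) :
    mmoment ((ρ.push e he).push e' he') k = mmoment ρ k := by
  ext i j
  rw [mmoment_push, of_apply, integral_mul_push_dens _ he (fun y => e' y ^ k)]
  simp only [h _, mmoment, of_apply]

theorem mmoment_push_of_affine (ρ : MatMeas p c d) (he : MapsTo e (Icc c d) (Icc c' d'))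
    (hst : ⇑e = fun x => s * x + t) (k : ℕ) :
    mmoment (ρ.push e he) k =
      ∑ i ∈ range (k + 1), ((k.choose i : ℝ) * t ^ (k - i) * s ^ i) • mmoment ρ i := by
  rw [mmoment_push]
  ext i j
  simp only [of_apply, hst, Matrix.sum_apply, Matrix.smul_apply, mmoment, smul_eq_mul,
    ← integral_const_mul]
  rw [← integral_finsetSum _ fun m _ => (ρ.integrable_pow_mul_dens m i j).const_mul _]
  refine integral_congr_ae (ae_of_all _ fun x => ?_)
  simp only [add_pow, Finset.sum_mul]
  refine Finset.sum_congr rfl fun m _ => ?_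
  ring

theorem mmoment_push_of_affine_eq_add {ρ σ : MatMeas p c d}
    (he : MapsTo e (Icc c d) (Icc c' d')) (hst : ⇑e = fun x => s * x + t)
    (h : ∀ j < n, mmoment ρ j = mmoment σ j) :
    mmoment (ρ.push e he) n =
      ∑ i ∈ range n, ((n.choose i : ℝ) * t ^ (n - i) * s ^ i) • mmoment σ i +
        s ^ n • mmoment ρ n := by
  rw [mmoment_push_of_affine ρ he hst, sum_range_succ, Nat.choose_self, Nat.sub_self,
    Nat.cast_one, pow_zero, one_mul, one_mul]
  congr 1
  exact Finset.sum_congr rfl fun i hi => by rw [h i (Finset.mem_range.mp hi)]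

theorem mmoment_push_of_affine_congr {ρ σ : MatMeas p c d}
    (he : MapsTo e (Icc c d) (Icc c' d')) (hst : ⇑e = fun x => s * x + t)
    (h : ∀ j < n, mmoment ρ j = mmoment σ j) :
    ∀ j < n, mmoment (ρ.push e he) j = mmoment (σ.push e he) j := fun j hj => by
  rw [mmoment_push_of_affine_eq_add he hst fun i hi => h i (hi.trans hj),
    mmoment_push_of_affine_eq_add (ρ := σ) he hst fun _ _ => rfl, h j hj]

end Push

end MatMeas

theorem mem_kthMomentSet_iff {p n : ℕ} {c d : ℝ} {S : ℕ → Matrix (Fin p) (Fin p) ℝ}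
    (hS : S 0 = 1) {T : Matrix (Fin p) (Fin p) ℝ} :
    T ∈ kthMomentSet p c d n S ↔
      ∃ ρ : MatMeas p c d, (∀ j < n, mmoment ρ j = S j) ∧ mmoment ρ n = T := by
  refine exists_congr fun ρ => and_congr_left' ⟨fun h j hj => ?_, fun h j _ hj => h j hj⟩
  rcases Nat.eq_zero_or_pos j with rfl | hj0
  · rw [ρ.mmoment_zero, hS]
  · exact h j hj0 hj

theorem kthMomentSet_push_affine {p : ℕ} {c d c' d' s t : ℝ} (μ : MatMeas p c d)
    (hs : s ≠ 0) (he : MapsTo (affineMeasurableEquiv s t hs) (Icc c d) (Icc c' d'))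
    (he' : MapsTo (affineMeasurableEquiv s t hs).symm (Icc c' d') (Icc c d)) (n : ℕ) :
    kthMomentSet p c' d' n (fun j => mmoment (μ.push _ he) j) =
      (fun X => ∑ i ∈ range n, ((n.choose i : ℝ) * t ^ (n - i) * s ^ i) • mmoment μ i +
        s ^ n • X) '' kthMomentSet p c d n (fun j => mmoment μ j) := by
  have hst := coe_affineMeasurableEquiv t hs
  have hst' := coe_affineMeasurableEquiv_symm t hs
  ext T
  simp only [mem_kthMomentSet_iff (MatMeas.mmoment_zero _), Set.mem_image]
  constructor
  · rintro ⟨ρ, hρ, rfl⟩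
    have hpull : ∀ j < n, mmoment (ρ.push _ he') j = mmoment μ j := fun j hj => by
      rw [MatMeas.mmoment_push_of_affine_congr he' hst' hρ j hj,
        MatMeas.mmoment_push_push_of_leftInverse _ he he' (MeasurableEquiv.symm_apply_apply _)]
    refine ⟨mmoment (ρ.push _ he') n, ⟨ρ.push _ he', hpull, rfl⟩, ?_⟩
    exact (MatMeas.mmoment_push_of_affine_eq_add he hst hpull).symm.trans
      (ρ.mmoment_push_push_of_leftInverse he' he (MeasurableEquiv.apply_symm_apply _) n)
  · rintro ⟨_, ⟨μ', hμ', rfl⟩, rfl⟩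
    exact ⟨μ'.push _ he, MatMeas.mmoment_push_of_affine_congr he hst hμ',
      MatMeas.mmoment_push_of_affine_eq_add he hst hμ'⟩

open scoped MatrixOrder in
theorem canonical_moments_affine_invariant_general (p n : ℕ)
    (a b : ℝ) (hab : a < b)
    (μ : MatMeas p 0 1) (ν : MatMeas p a b)
    (hpush : ∀ A : Set ℝ, MeasurableSet A →
      mmOf ν A = mmOf μ ((fun x : ℝ => (b - a) * x + a) ⁻¹' A))
    (Smin Smax : Matrix (Fin p) (Fin p) ℝ)
    (hminMemS : Smin ∈ kthMomentSet p 0 1 n (fun j => mmoment μ j))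
    (hminLeS : ∀ T ∈ kthMomentSet p 0 1 n (fun j => mmoment μ j), (T - Smin).PosSemidef)
    (hmaxMemS : Smax ∈ kthMomentSet p 0 1 n (fun j => mmoment μ j))
    (hmaxGeS : ∀ T ∈ kthMomentSet p 0 1 n (fun j => mmoment μ j), (Smax - T).PosSemidef)
    (Tmin Tmax : Matrix (Fin p) (Fin p) ℝ)
    (hminMemT : Tmin ∈ kthMomentSet p a b n (fun j => mmoment ν j))
    (hminLeT : ∀ T ∈ kthMomentSet p a b n (fun j => mmoment ν j), (T - Tmin).PosSemidef)
    (hmaxMemT : Tmax ∈ kthMomentSet p a b n (fun j => mmoment ν j))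
    (hmaxGeT : ∀ T ∈ kthMomentSet p a b n (fun j => mmoment ν j), (Tmax - T).PosSemidef)
    (R : Matrix (Fin p) (Fin p) ℝ) (hRpd : R.PosDef)
    (hRR : R * R = Smax - Smin)
    (R' : Matrix (Fin p) (Fin p) ℝ) (hR'pd : R'.PosDef)
    (hR'R' : R' * R' = Tmax - Tmin) :
    (mmoment ν n = ∑ i ∈ Finset.range (n + 1),
        ((n.choose i : ℝ) * a ^ (n - i) * (b - a) ^ i) • mmoment μ i) ∧
    (mmoment ν n - Tmin = ((b - a) ^ n : ℝ) • (mmoment μ n - Smin)) ∧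
    (mmoment ν n - Tmax = ((b - a) ^ n : ℝ) • (mmoment μ n - Smax)) ∧
    R'⁻¹ * (mmoment ν n - Tmin) * R'⁻¹ = R⁻¹ * (mmoment μ n - Smin) * R⁻¹ := by
  obtain ⟨he, he'⟩ := mapsTo_affineMeasurableEquiv_unitInterval hab
  have hst := coe_affineMeasurableEquiv a (sub_pos.2 hab).ne'
  have hmom : ∀ k, mmoment ν k = mmoment (μ.push _ he) k :=
    ν.mmoment_eq_of_mmOf_eq _ fun A hA => by rw [hpush A hA, MatMeas.mmOf_push, hst]
  set f : Matrix (Fin p) (Fin p) ℝ → Matrix (Fin p) (Fin p) ℝ := fun X =>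
    ∑ i ∈ range n, ((n.choose i : ℝ) * a ^ (n - i) * (b - a) ^ i) • mmoment μ i +
      (b - a) ^ n • X
  have hf_sub : ∀ X Y, f X - f Y = (b - a) ^ n • (X - Y) := fun X Y => by
    rw [add_sub_add_left_eq_sub, smul_sub]
  have hf : Monotone f := fun X Y hXY => by
    rw [le_iff, hf_sub]
    exact (le_iff.1 hXY).smul (pow_nonneg (sub_pos.2 hab).le n)
  have hset : kthMomentSet p a b n (fun j => mmoment ν j) =
      f '' kthMomentSet p 0 1 n (fun j => mmoment μ j) := by
    simp only [hmom]
    exact kthMomentSet_push_affine μ _ he he' n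
  have hTmin : Tmin = f Smin := IsLeast.unique ⟨hminMemT, fun T hT => hminLeT T hT⟩
    (hset ▸ hf.map_isLeast ⟨hminMemS, fun T hT => hminLeS T hT⟩)
  have hTmax : Tmax = f Smax := IsGreatest.unique ⟨hmaxMemT, fun T hT => hmaxGeT T hT⟩
    (hset ▸ hf.map_isGreatest ⟨hmaxMemS, fun T hT => hmaxGeS T hT⟩)
  have hTn : mmoment ν n = f (mmoment μ n) :=
    (hmom n).trans (MatMeas.mmoment_push_of_affine_eq_add he hst fun _ _ => rfl)
  refine ⟨(hmom n).trans (μ.mmoment_push_of_affine he hst n), by rw [hTn, hTmin, hf_sub],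
    by rw [hTn, hTmax, hf_sub], ?_⟩
  rw [hTn, hTmin, hf_sub]
  exact hRpd.inv_mul_smul_mul_inv_of_mul_self_eq_smul hR'pd.posSemidef
    (pow_pos (sub_pos.2 hab) n) (by rw [hR'R', hRR, hTmax, hTmin, hf_sub]) _

/-- Canonical moments of matrix measures are invariant under affine
transformations: if `ν` is the pushforward of the matrix measure `μ` on `[0,1]`
under `γ(x) = (b-a)x + a` (`a < b`), then
(i) `T_n = Σ_{i=0}^n C(n,i) a^{n-i} (b-a)^i S_i`,
(ii) `T_n - T_n⁻ = (b-a)^n (S_n - S_n⁻)` and `T_n - T_n⁺ = (b-a)^n (S_n - S_n⁺)`,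
(iii) the canonical moments of `ν` (computed in the moment space of matrix
measures on `[a,b]`) coincide with those of `μ`, whenever defined.  Here
`Smin, Smax` (resp. `Tmin, Tmax`) are the extremal `n`-th moments given the
previous moments, and `R` (resp. `R'`) is the symmetric positive definite
square root of `Smax - Smin` (resp. `Tmax - Tmin`). -/
theorem canonical_moments_affine_invariant (p n : ℕ) (hp : 0 < p) (hn : 1 ≤ n)
    (a b : ℝ) (hab : a < b)
    (μ : MatMeas p 0 1) (ν : MatMeas p a b)
    (hpush : ∀ A : Set ℝ, MeasurableSet A →
      mmOf ν A = mmOf μ ((fun x : ℝ => (b - a) * x + a) ⁻¹' A))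
    (Smin Smax : Matrix (Fin p) (Fin p) ℝ)
    (hminMemS : Smin ∈ kthMomentSet p 0 1 n (fun j => mmoment μ j))
    (hminLeS : ∀ T ∈ kthMomentSet p 0 1 n (fun j => mmoment μ j), (T - Smin).PosSemidef)
    (hmaxMemS : Smax ∈ kthMomentSet p 0 1 n (fun j => mmoment μ j))
    (hmaxGeS : ∀ T ∈ kthMomentSet p 0 1 n (fun j => mmoment μ j), (Smax - T).PosSemidef)
    (Tmin Tmax : Matrix (Fin p) (Fin p) ℝ)
    (hminMemT : Tmin ∈ kthMomentSet p a b n (fun j => mmoment ν j))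
    (hminLeT : ∀ T ∈ kthMomentSet p a b n (fun j => mmoment ν j), (T - Tmin).PosSemidef)
    (hmaxMemT : Tmax ∈ kthMomentSet p a b n (fun j => mmoment ν j))
    (hmaxGeT : ∀ T ∈ kthMomentSet p a b n (fun j => mmoment ν j), (Tmax - T).PosSemidef)
    (hDS : (Smax - Smin).PosDef) (hDT : (Tmax - Tmin).PosDef)
    (R : Matrix (Fin p) (Fin p) ℝ) (hRsymm : R.IsSymm) (hRpd : R.PosDef)
    (hRR : R * R = Smax - Smin)
    (R' : Matrix (Fin p) (Fin p) ℝ) (hR'symm : R'.IsSymm) (hR'pd : R'.PosDef)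
    (hR'R' : R' * R' = Tmax - Tmin) :
    (mmoment ν n = ∑ i ∈ Finset.range (n + 1),
        ((n.choose i : ℝ) * a ^ (n - i) * (b - a) ^ i) • mmoment μ i) ∧
    (mmoment ν n - Tmin = ((b - a) ^ n : ℝ) • (mmoment μ n - Smin)) ∧
    (mmoment ν n - Tmax = ((b - a) ^ n : ℝ) • (mmoment μ n - Smax)) ∧
    R'⁻¹ * (mmoment ν n - Tmin) * R'⁻¹ = R⁻¹ * (mmoment μ n - Smin) * R⁻¹ :=
  canonical_moments_affine_invariant_general p n a b hab μ ν hpush Smin Smax hminMemS hminLeS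
    hmaxMemS hmaxGeS Tmin Tmax hminMemT hminLeT hmaxMemT hmaxGeT R hRpd hRR R' hR'pd hR'R'
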